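/- arXiv:1004.4222 — 2 statements merged into one kernel-verified Lean document; each statement's English description precedes it below -/
import Mathlib

section
/- Let x ∈ R^n with support S of size k, let κ ∈ (0,1), and suppose h ∈ R^n satisfies ‖x + h‖₁ ≤ κ‖h‖₁ + ‖x‖₁. Then ‖h_{S^c}‖₁ ≤ ((1+κ)/(1−κ))‖h_S‖₁ and consequently ‖h‖₁ ≤ (2/(1−κ))√k ‖h‖₂. -/
/-! Since `x` vanishes off `S`, the reverse triangle inequality on `S` gives
`‖x + h‖₁ ≥ ‖x‖₁ - ‖h_S‖₁ + ‖h_{Sᶜ}‖₁`; comparing with the hypothesis and splitting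
`‖h‖₁ = ‖h_S‖₁ + ‖h_{Sᶜ}‖₁` yields the cone constraint. Then `‖h‖₁ ≤ (2 / (1 - κ)) ‖h_S‖₁`,
and Cauchy–Schwarz on the `k` coordinates of `S` bounds `‖h_S‖₁ ≤ √k ‖h‖₂`. -/

open Finset

section SparseCone

variable {ι : Type*} [Fintype ι]

lemma sum_abs_sub_add_sum_compl_le_sum_abs_add [DecidableEq ι] (x h : ι → ℝ) {S : Finset ι}
    (hx : ∀ i ∉ S, x i = 0) :
    ∑ i, |x i| - ∑ i ∈ S, |h i| + ∑ i ∈ Sᶜ, |h i| ≤ ∑ i, |x i + h i| := by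
  have hx_compl : ∑ i ∈ Sᶜ, |x i| = 0 :=
    sum_eq_zero fun i hi => by rw [hx i (mem_compl.1 hi), abs_zero]
  have hxh_compl : ∑ i ∈ Sᶜ, |x i + h i| = ∑ i ∈ Sᶜ, |h i| :=
    sum_congr rfl fun i hi => by rw [hx i (mem_compl.1 hi), zero_add]
  have hxh_on : ∑ i ∈ S, |x i| - ∑ i ∈ S, |h i| ≤ ∑ i ∈ S, |x i + h i| := by
    rw [← sum_sub_distrib]
    exact sum_le_sum fun i _ => by
      simpa [sub_neg_eq_add] using abs_sub_abs_le_abs_sub (x i) (-h i)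
  rw [← sum_add_sum_compl S fun i => |x i|, ← sum_add_sum_compl S fun i => |x i + h i|,
    hx_compl, hxh_compl]
  linarith

lemma sum_compl_abs_le_of_sum_abs_add_le [DecidableEq ι] {x h : ι → ℝ} {S : Finset ι} {κ : ℝ}
    (hκ : κ < 1) (hx : ∀ i ∉ S, x i = 0) (hmin : ∑ i, |x i + h i| ≤ κ * ∑ i, |h i| + ∑ i, |x i|) :
    ∑ i ∈ Sᶜ, |h i| ≤ (1 + κ) / (1 - κ) * ∑ i ∈ S, |h i| := by
  have hlower := sum_abs_sub_add_sum_compl_le_sum_abs_add x h hx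
  rw [← sum_add_sum_compl S fun i => |h i|] at hmin
  rw [div_mul_eq_mul_div, le_div_iff₀ (sub_pos.2 hκ)]
  linarith

lemma sum_abs_le_of_sum_compl_abs_le [DecidableEq ι] {h : ι → ℝ} {S : Finset ι} {c : ℝ}
    (hc : ∑ i ∈ Sᶜ, |h i| ≤ c * ∑ i ∈ S, |h i|) :
    ∑ i, |h i| ≤ (1 + c) * ∑ i ∈ S, |h i| := by
  rw [← sum_add_sum_compl S fun i => |h i|]
  linarith

lemma sum_abs_le_sqrt_card_mul_sqrt_sum_sq (h : ι → ℝ) (S : Finset ι) :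
    ∑ i ∈ S, |h i| ≤ √(#S) * √(∑ i, h i ^ 2) := by
  rw [← Real.sqrt_mul (Nat.cast_nonneg _)]
  apply Real.le_sqrt_of_sq_le
  calc (∑ i ∈ S, |h i|) ^ 2 ≤ (#S : ℝ) * ∑ i ∈ S, |h i| ^ 2 := sq_sum_le_card_mul_sum_sq
    _ = #S * ∑ i ∈ S, h i ^ 2 := by simp only [sq_abs]
    _ ≤ #S * ∑ i, h i ^ 2 := by
      gcongr
      exact subset_univ S

end SparseCone

theorem lasso_cone_constraint {n k : ℕ} (x h : Fin n → ℝ) (κ : ℝ)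
    (hκ : κ ∈ Set.Ioo (0:ℝ) 1)
    (hk : (Finset.univ.filter fun i => x i ≠ 0).card = k)
    (hmin : ∑ i, |x i + h i| ≤ κ * (∑ i, |h i|) + ∑ i, |x i|) :
    (∑ i ∈ (Finset.univ.filter fun i => x i ≠ 0)ᶜ, |h i| ≤
      (1 + κ) / (1 - κ) * ∑ i ∈ Finset.univ.filter (fun i => x i ≠ 0), |h i|) ∧
    ∑ i, |h i| ≤ 2 / (1 - κ) * Real.sqrt k * Real.sqrt (∑ i, (h i)^2) := by
  set S := Finset.univ.filter fun i => x i ≠ 0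
  have hκ1 : 0 < 1 - κ := sub_pos.2 hκ.2
  have hx : ∀ i ∉ S, x i = 0 := by simp [S]
  have hcone := sum_compl_abs_le_of_sum_abs_add_le hκ.2 hx hmin
  refine ⟨hcone, ?_⟩
  calc ∑ i, |h i| ≤ (1 + (1 + κ) / (1 - κ)) * ∑ i ∈ S, |h i| :=
        sum_abs_le_of_sum_compl_abs_le hcone
    _ = 2 / (1 - κ) * ∑ i ∈ S, |h i| := by field_simp; ring
    _ ≤ 2 / (1 - κ) * (√k * √(∑ i, h i ^ 2)) := by
        gcongr
        exact hk ▸ sum_abs_le_sqrt_card_mul_sqrt_sum_sq h S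
    _ = 2 / (1 - κ) * √k * √(∑ i, h i ^ 2) := (mul_assoc _ _ _).symm
end

section
/- (Dantzig selector error bound) Let x ∈ R^n have support of size k, y = Ax + w with ‖Aᵀw‖_∞ ≤ λσ, and let x̂ satisfy ‖x̂‖₁ ≤ ‖x‖₁ and ‖Aᵀ(y − Ax̂)‖_∞ ≤ λσ. If ρ_{4k}(A) > 0, then ‖x̂ − x‖₂ ≤ 4√k λσ / ρ_{4k}(A)². -/
open Finset

noncomputable def l1norm {n : ℕ} (x : Fin n → ℝ) : ℝ := ∑ i, |x i|
noncomputable def l2norm {n : ℕ} (x : Fin n → ℝ) : ℝ := Real.sqrt (∑ i, (x i)^2)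
noncomputable def linfnorm {n : ℕ} (x : Fin n → ℝ) : ℝ := ⨆ i, |x i|

noncomputable def cmsv {m n : ℕ} (A : Matrix (Fin m) (Fin n) ℝ) (s : ℝ) : ℝ :=
  sInf {r | ∃ x : Fin n → ℝ, x ≠ 0 ∧ (l1norm x)^2 ≤ s * (l2norm x)^2 ∧
    r = l2norm (A.mulVec x) / l2norm x}

/-!
Write `h = xhat - x` and `S` for the support of `x`. Since `‖xhat‖₁ ≤ ‖x‖₁`, the error satisfies the
cone condition `‖h_{Sᶜ}‖₁ ≤ ‖h_S‖₁`; with Cauchy–Schwarz on `S` this gives `‖h‖₁ ≤ 2√k ‖h‖₂`, so `h`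
is admissible for `ρ = ρ_{4k}(A)` and `ρ ‖h‖₂ ≤ ‖Ah‖₂`. Both `x` and `xhat` fit the data, so
`‖AᵀAh‖_∞ ≤ 2λσ`, and by Hölder `‖Ah‖₂² = ⟪h, AᵀAh⟫ ≤ 2λσ ‖h‖₁ ≤ 4√k λσ ‖h‖₂`.
Comparing the two bounds gives `ρ² ‖h‖₂ ≤ 4√k λσ`.
-/

open Matrix

variable {m n : ℕ}

lemma l1norm_nonneg (x : Fin n → ℝ) : 0 ≤ l1norm x := sum_nonneg fun _ _ => abs_nonneg _

lemma l2norm_nonneg (x : Fin n → ℝ) : 0 ≤ l2norm x := Real.sqrt_nonneg _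

lemma l2norm_sq (x : Fin n → ℝ) : l2norm x ^ 2 = ∑ i, x i ^ 2 :=
  Real.sq_sqrt (sum_nonneg fun _ _ => sq_nonneg _)

lemma l2norm_pos {x : Fin n → ℝ} (hx : x ≠ 0) : 0 < l2norm x := by
  obtain ⟨i, hi⟩ := Function.ne_iff.mp hx
  exact Real.sqrt_pos.mpr <| sum_pos' (fun _ _ => sq_nonneg _) ⟨i, mem_univ i, sq_pos_of_ne_zero hi⟩

lemma abs_le_linfnorm (x : Fin n → ℝ) (i : Fin n) : |x i| ≤ linfnorm x :=
  le_ciSup (f := fun i => |x i|) (Set.finite_range _).bddAbove i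

lemma linfnorm_nonneg (x : Fin n → ℝ) : 0 ≤ linfnorm x :=
  Real.iSup_nonneg fun _ => abs_nonneg _

lemma linfnorm_sub_le (x y : Fin n → ℝ) : linfnorm (x - y) ≤ linfnorm x + linfnorm y :=
  Real.iSup_le (fun i => (abs_sub (x i) (y i)).trans <|
      add_le_add (abs_le_linfnorm x i) (abs_le_linfnorm y i))
    (add_nonneg (linfnorm_nonneg x) (linfnorm_nonneg y))

lemma dotProduct_le_l1norm_mul_linfnorm (x y : Fin n → ℝ) : x ⬝ᵥ y ≤ l1norm x * linfnorm y := by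
  rw [dotProduct, l1norm, sum_mul]
  refine sum_le_sum fun i _ => ?_
  calc x i * y i ≤ |x i| * |y i| := (le_abs_self _).trans_eq (abs_mul _ _)
    _ ≤ |x i| * linfnorm y := by gcongr; exact abs_le_linfnorm y i

lemma sum_abs_le_sqrt_card_mul_l2norm (s : Finset (Fin n)) (x : Fin n → ℝ) :
    ∑ i ∈ s, |x i| ≤ √(#s : ℝ) * l2norm x := by
  rw [l2norm, ← Real.sqrt_mul (Nat.cast_nonneg _)]
  refine Real.le_sqrt_of_sq_le ?_
  calc (∑ i ∈ s, |x i|) ^ 2 ≤ #s * ∑ i ∈ s, |x i| ^ 2 := sq_sum_le_card_mul_sum_sq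
    _ ≤ #s * ∑ i, x i ^ 2 := by
      simp_rw [sq_abs]
      exact mul_le_mul_of_nonneg_left
        (sum_le_sum_of_subset_of_nonneg (subset_univ s) fun _ _ _ => sq_nonneg _) (by positivity)

lemma l1norm_sub_le_two_mul_sum_support {x xhat : Fin n → ℝ} (hmin : l1norm xhat ≤ l1norm x) :
    l1norm (xhat - x) ≤ 2 * ∑ i ∈ univ.filter (fun i => x i ≠ 0), |(xhat - x) i| := by
  set S := univ.filter fun i => x i ≠ 0
  have hoff : ∀ i ∈ Sᶜ, x i = 0 := fun i hi => by simpa [S] using hi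
  have hx : l1norm x = ∑ i ∈ S, |x i| := by
    rw [l1norm, ← sum_add_sum_compl S,
      sum_eq_zero (s := Sᶜ) fun i hi => by rw [hoff i hi, abs_zero], add_zero]
  have hxhat : l1norm xhat = ∑ i ∈ S, |xhat i| + ∑ i ∈ Sᶜ, |(xhat - x) i| := by
    rw [l1norm, ← sum_add_sum_compl S]
    congr 1
    exact sum_congr rfl fun i hi => by simp [hoff i hi]
  have hS : ∑ i ∈ S, |x i| - ∑ i ∈ S, |(xhat - x) i| ≤ ∑ i ∈ S, |xhat i| := by
    rw [← sum_sub_distrib]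
    gcongr with i
    rw [Pi.sub_apply, abs_sub_comm]
    linarith [abs_sub_abs_le_abs_sub (x i) (xhat i)]
  rw [l1norm, ← sum_add_sum_compl S]
  linarith

lemma cmsv_mul_l2norm_le (A : Matrix (Fin m) (Fin n) ℝ) {s : ℝ} {x : Fin n → ℝ}
    (hx : l1norm x ^ 2 ≤ s * l2norm x ^ 2) : cmsv A s * l2norm x ≤ l2norm (A *ᵥ x) := by
  rcases eq_or_ne x 0 with rfl | hx0
  · simp [l2norm]
  have hbdd : BddBelow {r | ∃ z : Fin n → ℝ, z ≠ 0 ∧ l1norm z ^ 2 ≤ s * l2norm z ^ 2 ∧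
      r = l2norm (A *ᵥ z) / l2norm z} := by
    refine ⟨0, ?_⟩
    rintro r ⟨z, -, -, rfl⟩
    exact div_nonneg (l2norm_nonneg _) (l2norm_nonneg _)
  rw [← le_div_iff₀ (l2norm_pos hx0)]
  exact csInf_le hbdd ⟨x, hx0, hx, rfl⟩

lemma l2norm_mulVec_sq_le (A : Matrix (Fin m) (Fin n) ℝ) (x : Fin n → ℝ) :
    l2norm (A *ᵥ x) ^ 2 ≤ l1norm x * linfnorm (Aᵀ *ᵥ (A *ᵥ x)) := by
  have : l2norm (A *ᵥ x) ^ 2 = x ⬝ᵥ (Aᵀ *ᵥ (A *ᵥ x)) := by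
    rw [dotProduct_mulVec, vecMul_transpose, l2norm_sq, dotProduct]
    simp_rw [sq]
  exact this ▸ dotProduct_le_l1norm_mul_linfnorm _ _

theorem dantzig_selector_error_bound {m n k : ℕ} (A : Matrix (Fin m) (Fin n) ℝ)
    (x xhat : Fin n → ℝ) (w : Fin m → ℝ) (y : Fin m → ℝ) (lamsig : ℝ)
    (hls : 0 < lamsig)
    (hk : (Finset.univ.filter fun i => x i ≠ 0).card = k)
    (hy : y = A.mulVec x + w)
    (hw : linfnorm (A.transpose.mulVec w) ≤ lamsig)
    (hfeas : linfnorm (A.transpose.mulVec (y - A.mulVec xhat)) ≤ lamsig)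
    (hmin : l1norm xhat ≤ l1norm x)
    (hρ : 0 < cmsv A (4 * k)) :
    l2norm (xhat - x) ≤ 4 * Real.sqrt k * lamsig / (cmsv A (4 * k))^2 := by
  set h := xhat - x
  set ρ := cmsv A (4 * k)
  have hcone : l1norm h ≤ 2 * √(k : ℝ) * l2norm h := by
    have := sum_abs_le_sqrt_card_mul_l2norm (univ.filter fun i => x i ≠ 0) h
    rw [hk] at this
    linarith [l1norm_sub_le_two_mul_sum_support hmin]
  have hgram : linfnorm (Aᵀ *ᵥ (A *ᵥ h)) ≤ 2 * lamsig := by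
    have : A *ᵥ h = w - (y - A *ᵥ xhat) := by
      rw [hy, mulVec_sub]
      abel
    rw [this, mulVec_sub]
    linarith [linfnorm_sub_le (Aᵀ *ᵥ w) (Aᵀ *ᵥ (y - A *ᵥ xhat))]
  have hlower : ρ * l2norm h ≤ l2norm (A *ᵥ h) := by
    refine cmsv_mul_l2norm_le A ?_
    have := pow_le_pow_left₀ (l1norm_nonneg h) hcone 2
    rw [mul_pow, mul_pow, Real.sq_sqrt (Nat.cast_nonneg k)] at this
    linarith
  have key : (ρ * l2norm h) ^ 2 ≤ 4 * √(k : ℝ) * lamsig * l2norm h := calc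
    (ρ * l2norm h) ^ 2 ≤ l2norm (A *ᵥ h) ^ 2 :=
      pow_le_pow_left₀ (mul_nonneg hρ.le (l2norm_nonneg h)) hlower 2
    _ ≤ l1norm h * linfnorm (Aᵀ *ᵥ (A *ᵥ h)) := l2norm_mulVec_sq_le A h
    _ ≤ 2 * √(k : ℝ) * l2norm h * (2 * lamsig) :=
      mul_le_mul hcone hgram (linfnorm_nonneg _) (mul_nonneg (by positivity) (l2norm_nonneg h))
    _ = 4 * √(k : ℝ) * lamsig * l2norm h := by ring
  rw [le_div_iff₀ (by positivity)]
  rcases (l2norm_nonneg h).eq_or_lt with ht | ht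
  · rw [← ht, zero_mul]
    positivity
  · nlinarith
end
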